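/- arXiv:1511.02969 — 2 statements merged into one kernel-verified Lean document; each statement's English description precedes it below -/
import Mathlib

section
/- (Antipode rule / ruler proposition.) Let p be the total spherical perspective map and let P ∈ S² with P ∉ {F, B} (F = (0,1,0), B = (0,−1,0)). Then p(−P) = p(P) − π·p(P)/‖p(P)‖. In particular, p(P), the origin F' = (0,0), and p(−P) are collinear, p(−P) lies on the ray from p(P) through the origin, and ‖p(P) − p(−P)‖ = π. -/
open scoped RealInnerProductSpace

noncomputable section

abbrev E3 := EuclideanSpace ℝ (Fin 3)
abbrev E2 := EuclideanSpace ℝ (Fin 2)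

/-- The vector (a, b) in euclidean ℝ². -/
def vec2 (a b : ℝ) : E2 := (WithLp.equiv 2 (Fin 2 → ℝ)).symm ![a, b]

/-- The vector (a, b, c) in euclidean ℝ³. -/
def vec3 (a b c : ℝ) : E3 := (WithLp.equiv 2 (Fin 3 → ℝ)).symm ![a, b, c]

/-- The total spherical perspective map: p(x,y,z) = arccos(y/‖P‖) · (x,z)/√(x²+z²). -/
def persp (P : E3) : E2 :=
  (Real.arccos (P 1 / ‖P‖) / Real.sqrt ((P 0) ^ 2 + (P 2) ^ 2)) • vec2 (P 0) (P 2)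

/-- The front point F = (0,1,0). -/
def Fpt : E3 := vec3 0 1 0

/-- The back point B = (0,-1,0). -/
def Bpt : E3 := vec3 0 (-1) 0

/-
Write `P = (x, y, z)`. Away from the axis `x = z = 0`, the map is polar coordinates in the
image plane: `p(P)` has radius `arccos y` and direction `(x, z)/√(x² + z²)`. The antipode
reverses the direction and replaces the radius by `arccos (-y) = π - arccos y`, so
`p(-P) = (arccos y - π) • u` for the unit vector `u` along `p(P)`.
-/

def polarAngle (P : E3) : ℝ := Real.arccos (P 1 / ‖P‖)

def perspDir (P : E3) : E2 := (Real.sqrt (P 0 ^ 2 + P 2 ^ 2))⁻¹ • vec2 (P 0) (P 2)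

lemma norm_sq_eq_coords (P : E3) : ‖P‖ ^ 2 = P 0 ^ 2 + P 1 ^ 2 + P 2 ^ 2 := by
  simp [EuclideanSpace.real_norm_sq_eq, Fin.sum_univ_three]

lemma norm_vec2 (a b : ℝ) : ‖vec2 a b‖ = Real.sqrt (a ^ 2 + b ^ 2) := by
  simp [vec2, EuclideanSpace.norm_eq, Fin.sum_univ_two]

lemma vec2_neg (a b : ℝ) : vec2 (-a) (-b) = -vec2 a b := by
  ext i; fin_cases i <;> simp [vec2]

lemma persp_eq_polarAngle_smul_perspDir (P : E3) : persp P = polarAngle P • perspDir P := by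
  rw [persp, perspDir, polarAngle, div_eq_mul_inv, mul_smul]

lemma polarAngle_neg (P : E3) : polarAngle (-P) = Real.pi - polarAngle P := by
  simp only [polarAngle, norm_neg, PiLp.neg_apply, neg_div, Real.arccos_neg]

lemma perspDir_neg (P : E3) : perspDir (-P) = -perspDir P := by
  simp only [perspDir, PiLp.neg_apply, neg_sq, vec2_neg, smul_neg]

lemma norm_perspDir {P : E3} (h : 0 < P 0 ^ 2 + P 2 ^ 2) : ‖perspDir P‖ = 1 := by
  rw [perspDir, norm_smul, norm_vec2, norm_inv, Real.norm_eq_abs,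
    abs_of_pos (Real.sqrt_pos.mpr h), inv_mul_cancel₀ (Real.sqrt_pos.mpr h).ne']

lemma abs_div_norm_lt_one {P : E3} (h : 0 < P 0 ^ 2 + P 2 ^ 2) : |P 1 / ‖P‖| < 1 := by
  have hP : 0 < ‖P‖ := by
    refine norm_pos_iff.mpr fun h0 => ?_
    simp [h0] at h
  rw [abs_div, abs_norm, div_lt_one hP, ← sq_lt_sq₀ (abs_nonneg _) hP.le, sq_abs,
    norm_sq_eq_coords]
  linarith

lemma polarAngle_mem_Ioo {P : E3} (h : 0 < P 0 ^ 2 + P 2 ^ 2) :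
    polarAngle P ∈ Set.Ioo 0 Real.pi := by
  obtain ⟨hlo, hhi⟩ := abs_lt.mp (abs_div_norm_lt_one h)
  refine ⟨Real.arccos_pos.mpr hhi, lt_of_le_of_ne (Real.arccos_le_pi _) fun hpi => ?_⟩
  linarith [Real.arccos_eq_pi.mp hpi]

lemma norm_persp {P : E3} (h : 0 < P 0 ^ 2 + P 2 ^ 2) : ‖persp P‖ = polarAngle P := by
  rw [persp_eq_polarAngle_smul_perspDir, norm_smul, norm_perspDir h, mul_one,
    Real.norm_eq_abs, abs_of_pos (polarAngle_mem_Ioo h).1]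

lemma persp_neg (P : E3) : persp (-P) = (polarAngle P - Real.pi) • perspDir P := by
  rw [persp_eq_polarAngle_smul_perspDir, polarAngle_neg, perspDir_neg, smul_neg, ← neg_smul,
    neg_sub]

lemma off_axis_of_mem_sphere {P : E3} (hP : P ∈ Metric.sphere (0 : E3) 1) (hF : P ≠ Fpt)
    (hB : P ≠ Bpt) : 0 < P 0 ^ 2 + P 2 ^ 2 := by
  have hsum : P 0 ^ 2 + P 1 ^ 2 + P 2 ^ 2 = 1 := by
    rw [← norm_sq_eq_coords, mem_sphere_zero_iff_norm.mp hP, one_pow]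
  by_contra! hle
  have hx : P 0 = 0 := by nlinarith [sq_nonneg (P 0), sq_nonneg (P 2)]
  have hz : P 2 = 0 := by nlinarith [sq_nonneg (P 0), sq_nonneg (P 2)]
  have hy : P 1 = 1 ∨ P 1 = -1 := sq_eq_one_iff.mp (by nlinarith)
  rcases hy with hy | hy
  · exact hF (by ext i; fin_cases i <;> simp [Fpt, vec3, hx, hy, hz])
  · exact hB (by ext i; fin_cases i <;> simp [Bpt, vec3, hx, hy, hz])

/-- antipode rule: p(-P) = p(P) - π·p(P)/‖p(P)‖; in particular p(-P) lies on the
ray from p(P) through the origin (beyond the origin) and ‖p(P) - p(-P)‖ = π. -/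
theorem stmt9 (P : E3) (hP : P ∈ Metric.sphere (0 : E3) 1) (hF : P ≠ Fpt) (hB : P ≠ Bpt) :
    persp (-P) = persp P - (Real.pi / ‖persp P‖) • persp P ∧
    (∃ t : ℝ, t < 0 ∧ persp (-P) = t • persp P) ∧
    ‖persp P - persp (-P)‖ = Real.pi := by
  have hoff := off_axis_of_mem_sphere hP hF hB
  obtain ⟨ha, haπ⟩ := polarAngle_mem_Ioo hoff
  rw [persp_neg, norm_persp hoff, persp_eq_polarAngle_smul_perspDir]
  set a := polarAngle P
  set u := perspDir P
  refine ⟨?_, ⟨(a - Real.pi) / a, div_neg_of_neg_of_pos (by linarith) ha, ?_⟩, ?_⟩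
  · rw [smul_smul, ← sub_smul, div_mul_cancel₀ _ ha.ne']
  · rw [smul_smul, div_mul_cancel₀ _ ha.ne']
  · rw [← sub_smul, sub_sub_cancel, norm_smul, norm_perspDir hoff, mul_one, Real.norm_eq_abs,
      abs_of_pos Real.pi_pos]
end
end

section
/- Let ℓ be a frontal line in the observer's plane, i.e., ℓ ⊆ {y = 0}, not through the origin. Then the image of ℓ under the total spherical perspective map p is contained in the circle of radius π/2 centered at the origin of ℝ², and its closure in ℝ² is a closed half of that circle (an arc of angular length π) whose endpoints are p-images of the two unit direction vectors ±d of ℓ. -/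
open scoped RealInnerProductSpace

noncomputable section

/-- The line through A with direction d. -/
def lineSet (A d : E3) : Set E3 := {P | ∃ t : ℝ, P = A + t • d}


/-!
On the observer's plane `y = 0` the perspective map is the radial projection `u ↦ (π/2) u/‖u‖`
of the `xz`-coordinates onto the circle of radius `π/2`, so everything reduces to the radial
projection of a line `a + t d` (with `‖d‖ = 1`) in a Euclidean plane. Write `n = a - ⟪a,d⟫ d` for
the foot of the perpendicular from the origin; then `⟪a + t d, n⟫ = ‖n‖² > 0`, so the image lies in
the open half-circle `⟪w, n⟫ > 0`, and conversely every `w` there is the projection of the point of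
the line where the ray through `w` meets it. The closure of the open half-circle is the closed one,
and what is added are its two points orthogonal to `n`, which in the plane are `±(π/2) d`.
-/

open Real Filter Topology Module

section

variable {E : Type*} [NormedAddCommGroup E] [InnerProductSpace ℝ E]

lemma norm_div_norm_smul {r : ℝ} (hr : 0 ≤ r) {u : E} (hu : u ≠ 0) : ‖(r / ‖u‖) • u‖ = r := by
  simpa [div_eq_mul_inv] using norm_smul_inv_norm' (𝕜 := ℝ) hr hu

lemma inner_sub_inner_smul_of_norm_eq_one (a : E) {d : E} (hd : ‖d‖ = 1) :
    ⟪a - ⟪a, d⟫ • d, d⟫ = 0 := by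
  rw [inner_sub_left, real_inner_smul_left, real_inner_self_eq_norm_sq, hd]
  ring

lemma closure_sphere_inter_inner_pos {n : E} (hn : n ≠ 0) {r : ℝ} (hr : 0 < r) :
    closure {w ∈ Metric.sphere (0 : E) r | 0 < ⟪w, n⟫}
      = {w ∈ Metric.sphere (0 : E) r | 0 ≤ ⟪w, n⟫} := by
  apply subset_antisymm
  · refine closure_minimal (fun w hw => ⟨hw.1, hw.2.le⟩) ?_
    exact Metric.isClosed_sphere.inter (isClosed_le continuous_const (by fun_prop) :
      IsClosed {w : E | 0 ≤ ⟪w, n⟫})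
  rintro w ⟨hw, hwn⟩
  rcases hwn.lt_or_eq with hpos | hzero
  · exact subset_closure ⟨hw, hpos⟩
  rw [mem_sphere_zero_iff_norm] at hw
  have hw0 : ‖w‖ ≠ 0 := by rw [hw]; exact hr.ne'
  -- tilt `w` towards `n` and push it back onto the sphere
  let f : ℝ → E := fun ε => (r / ‖w + ε • n‖) • (w + ε • n)
  have hf : Tendsto f (𝓝[>] 0) (𝓝 w) := by
    have hcont : ContinuousAt f 0 := by
      refine ContinuousAt.smul (continuousAt_const.div (by fun_prop) (by simpa using hw0))
        (by fun_prop)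
    have hf0 : f 0 = w := by simp [f, hw, hr.ne']
    exact hf0 ▸ hcont.tendsto.mono_left nhdsWithin_le_nhds
  refine mem_closure_of_tendsto hf ?_
  filter_upwards [self_mem_nhdsWithin] with ε (hε : 0 < ε)
  have hinner : ⟪w + ε • n, n⟫ = ε * ‖n‖ ^ 2 := by
    rw [inner_add_left, real_inner_smul_left, ← hzero, real_inner_self_eq_norm_sq, zero_add]
  have hne : w + ε • n ≠ 0 := by
    intro h
    rw [h, inner_zero_left] at hinner
    have : 0 < ε * ‖n‖ ^ 2 := by positivity
    linarith
  refine ⟨mem_sphere_zero_iff_norm.mpr (norm_div_norm_smul hr.le hne), ?_⟩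
  rw [real_inner_smul_left, hinner]
  have := norm_pos_iff.mpr hne
  positivity

lemma eq_inner_smul_of_inner_eq_zero (h2 : finrank ℝ E = 2) {n d : E} (hn : n ≠ 0)
    (hd : ‖d‖ = 1) (hnd : ⟪n, d⟫ = 0) {v : E} (hv : ⟪v, n⟫ = 0) : v = ⟪v, d⟫ • d := by
  have : Fact (finrank ℝ E = 1 + 1) := ⟨h2⟩
  have : FiniteDimensional ℝ E := .of_fact_finrank_eq_succ 1
  have hd0 : d ≠ 0 := norm_ne_zero_iff.mp (by rw [hd]; exact one_ne_zero)
  have hspan : (ℝ ∙ d) = (ℝ ∙ n)ᗮ := by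
    refine Submodule.eq_of_le_of_finrank_eq ?_ ?_
    · rw [Submodule.span_singleton_le_iff_mem, Submodule.mem_orthogonal_singleton_iff_inner_right]
      exact hnd
    · rw [finrank_span_singleton hd0, Submodule.finrank_orthogonal_span_singleton (n := 1) hn]
  have hvd : v ∈ (ℝ ∙ d) := by
    rw [hspan, Submodule.mem_orthogonal_singleton_iff_inner_right, real_inner_comm]
    exact hv
  obtain ⟨c, rfl⟩ := Submodule.mem_span_singleton.mp hvd
  rw [real_inner_smul_left, real_inner_self_eq_norm_sq, hd, one_pow, mul_one]

lemma sphere_inter_inner_eq_zero (h2 : finrank ℝ E = 2) {n d : E} (hn : n ≠ 0)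
    (hd : ‖d‖ = 1) (hnd : ⟪n, d⟫ = 0) {r : ℝ} (hr : 0 ≤ r) :
    {w ∈ Metric.sphere (0 : E) r | ⟪w, n⟫ = 0} = {r • d, -(r • d)} := by
  ext w
  simp only [mem_sphere_zero_iff_norm, Set.mem_insert_iff, Set.mem_singleton_iff]
  constructor
  · rintro ⟨hw, hwn⟩
    have hwd := eq_inner_smul_of_inner_eq_zero h2 hn hd hnd hwn
    rw [hwd, norm_smul, hd, mul_one, Real.norm_eq_abs] at hw
    rcases (abs_eq hr).mp hw with h | h
    · left; rw [hwd, h]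
    · right; rw [hwd, h, neg_smul]
  · have hdn : ⟪d, n⟫ = 0 := by rw [real_inner_comm]; exact hnd
    rintro (rfl | rfl)
    · simp [norm_smul, hd, abs_of_nonneg hr, real_inner_smul_left, hdn]
    · simp [norm_smul, hd, abs_of_nonneg hr, real_inner_smul_left, hdn]

lemma image_line_eq_sphere_inter_inner_pos (h2 : finrank ℝ E = 2) {a d : E} (hd : ‖d‖ = 1)
    (hO : ∀ t : ℝ, a + t • d ≠ 0) {r : ℝ} (hr : 0 < r) :
    (fun u : E => (r / ‖u‖) • u) '' Set.range (fun t : ℝ => a + t • d)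
      = {w ∈ Metric.sphere (0 : E) r | 0 < ⟪w, a - ⟪a, d⟫ • d⟫} := by
  set n := a - ⟪a, d⟫ • d with hn_def
  have hnd : ⟪n, d⟫ = 0 := inner_sub_inner_smul_of_norm_eq_one a hd
  have hn : n ≠ 0 := by simpa [n, sub_eq_add_neg] using hO (-⟪a, d⟫)
  have hn2 : 0 < ‖n‖ ^ 2 := by positivity
  ext w
  constructor
  · rintro ⟨_, ⟨t, rfl⟩, rfl⟩
    have hline : a + t • d = n + (t + ⟪a, d⟫) • d := by rw [hn_def]; module
    have hinner : ⟪a + t • d, n⟫ = ‖n‖ ^ 2 := by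
      rw [hline, inner_add_left, real_inner_smul_left, real_inner_comm n d, hnd,
        real_inner_self_eq_norm_sq, mul_zero, add_zero]
    refine ⟨mem_sphere_zero_iff_norm.mpr (norm_div_norm_smul hr.le (hO t)), ?_⟩
    rw [real_inner_smul_left, hinner]
    have := norm_pos_iff.mpr (hO t)
    positivity
  · rintro ⟨hw, hwn⟩
    rw [mem_sphere_zero_iff_norm] at hw
    -- the point of the line on the ray through `w` is `c • w`
    set c := ‖n‖ ^ 2 / ⟪w, n⟫ with hc
    have hc0 : 0 < c := by positivity
    have hperp : ⟪c • w - n, n⟫ = 0 := by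
      rw [inner_sub_left, real_inner_smul_left, real_inner_self_eq_norm_sq, hc,
        div_mul_cancel₀ _ hwn.ne', sub_self]
    have hcw := eq_inner_smul_of_inner_eq_zero h2 hn hd hnd hperp
    rw [inner_sub_left, hnd, sub_zero, real_inner_smul_left] at hcw
    refine ⟨c • w, ⟨c * ⟪w, d⟫ - ⟪a, d⟫, ?_⟩, ?_⟩
    · rw [sub_eq_iff_eq_add] at hcw
      rw [hcw, hn_def]
      module
    · show (r / ‖c • w‖) • c • w = w
      rw [norm_smul, Real.norm_eq_abs, abs_of_pos hc0, hw, smul_smul,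
        show r / (c * r) * c = 1 by field_simp, one_smul]

end

lemma lineSet_eq_range (A d : E3) : lineSet A d = Set.range fun t : ℝ => A + t • d := by
  ext P
  simp [lineSet, eq_comm]

def xzPart : E3 →ₗ[ℝ] E2 where
  toFun P := vec2 (P 0) (P 2)
  map_add' P Q := by ext i; fin_cases i <;> simp [vec2]
  map_smul' c P := by ext i; fin_cases i <;> simp [vec2]

lemma inner_xzPart {P : E3} (hP : P 1 = 0) (Q : E3) : ⟪xzPart P, xzPart Q⟫ = ⟪P, Q⟫ := by
  simp [xzPart, vec2, PiLp.inner_apply, Fin.sum_univ_two, Fin.sum_univ_three, hP]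

lemma norm_xzPart {P : E3} (hP : P 1 = 0) : ‖xzPart P‖ = ‖P‖ := by
  rw [norm_eq_sqrt_real_inner, norm_eq_sqrt_real_inner, inner_xzPart hP]

lemma persp_eq_of_apply_one_eq_zero {P : E3} (hP : P 1 = 0) :
    persp P = (π / 2 / ‖xzPart P‖) • xzPart P := by
  have hnorm : ‖xzPart P‖ = √(P 0 ^ 2 + P 2 ^ 2) := by
    simp [xzPart, vec2, EuclideanSpace.norm_eq, Fin.sum_univ_two]
  rw [persp, hP, zero_div, arccos_zero, hnorm]
  rfl

lemma xzPart_add_smul_ne_zero {A d : E3} (hA : A 1 = 0) (hd1 : d 1 = 0) {t : ℝ}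
    (hO : A + t • d ≠ 0) : xzPart A + t • xzPart d ≠ 0 := by
  rw [← map_smul, ← map_add, ← norm_ne_zero_iff, norm_xzPart (by simp [hA, hd1]),
    norm_ne_zero_iff]
  exact hO

lemma persp_image_lineSet {A d : E3} (hA : A 1 = 0) (hd1 : d 1 = 0) :
    persp '' lineSet A d
      = (fun u : E2 => (π / 2 / ‖u‖) • u) '' Set.range fun t : ℝ => xzPart A + t • xzPart d := by
  rw [lineSet_eq_range, ← Set.range_comp, ← Set.range_comp]
  congr 1
  funext t
  simp only [Function.comp_apply, persp_eq_of_apply_one_eq_zero (by simp [hA, hd1] :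
    (A + t • d) 1 = 0), map_add, map_smul]

/-- a frontal line in the observer plane y = 0, not through the origin, maps into
the circle of radius π/2; its closure is a closed half of that circle (here: the half on the
non-negative side of the direction of A - ⟪A,d⟫d, the foot of the perpendicular from O), whose
endpoints are the images of the two unit directions ±d of the line. -/
theorem stmt15 (A d : E3) (hA : A 1 = 0) (hd1 : d 1 = 0) (hd : ‖d‖ = 1)
    (hO : ∀ t : ℝ, A + t • d ≠ 0) :
    persp '' lineSet A d ⊆ Metric.sphere (0 : E2) (Real.pi / 2) ∧
    closure (persp '' lineSet A d)
      = {w ∈ Metric.sphere (0 : E2) (Real.pi / 2) |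
          0 ≤ ⟪w, vec2 ((A - ⟪A, d⟫ • d) 0) ((A - ⟪A, d⟫ • d) 2)⟫} ∧
    closure (persp '' lineSet A d) \ persp '' lineSet A d = {persp d, persp (-d)} := by
  set a := xzPart A
  set e := xzPart d
  have he : ‖e‖ = 1 := by rw [norm_xzPart hd1, hd]
  have hO' : ∀ t : ℝ, a + t • e ≠ 0 := fun t => xzPart_add_smul_ne_zero hA hd1 (hO t)
  have hn : a - ⟪a, e⟫ • e ≠ 0 := by simpa [sub_eq_add_neg] using hO' (-⟪a, e⟫)
  have hne : ⟪a - ⟪a, e⟫ • e, e⟫ = 0 := inner_sub_inner_smul_of_norm_eq_one a he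
  have hnormal : vec2 ((A - ⟪A, d⟫ • d) 0) ((A - ⟪A, d⟫ • d) 2) = a - ⟪a, e⟫ • e := by
    rw [inner_xzPart hA, ← map_smul, ← map_sub]; rfl
  have himage : persp '' lineSet A d
      = {w ∈ Metric.sphere (0 : E2) (π / 2) | 0 < ⟪w, a - ⟪a, e⟫ • e⟫} := by
    rw [persp_image_lineSet hA hd1,
      image_line_eq_sphere_inter_inner_pos finrank_euclideanSpace_fin he hO' (by positivity)]
  have hclosure := closure_sphere_inter_inner_pos hn (r := π / 2) (by positivity)
  have hpersp_d : persp d = (π / 2) • e := by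
    rw [persp_eq_of_apply_one_eq_zero hd1, he, div_one]
  have hpersp_neg_d : persp (-d) = -((π / 2) • e) := by
    rw [persp_eq_of_apply_one_eq_zero (by simp [hd1]), map_neg, norm_neg, he, div_one, smul_neg]
  rw [hnormal, himage, hclosure, hpersp_d, hpersp_neg_d,
    ← sphere_inter_inner_eq_zero finrank_euclideanSpace_fin hn he hne (by positivity)]
  refine ⟨Set.sep_subset _ _, rfl, ?_⟩
  ext w
  simp only [Set.mem_sdiff, Set.mem_sep_iff, not_and, not_lt]
  grind
end
end
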